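/- arXiv:1709.04285 — 4 statements merged into one kernel-verified Lean document; each statement's English description precedes it below -/
import Mathlib

section
/- Let c : (0,∞)² → [0,∞) and γ₁ > 0. If ∫₀^∞ c(x,y) d(x^{−2γ₁}) is finite (as a Stieltjes integral with respect to the decreasing function x ↦ x^{−2γ₁}), and c is nondecreasing in its first argument, then ∫₀^∞ ∫₀^∞ c(x₁ ∧ x₂, y) d(x₁^{−γ₁}) d(x₂^{−γ₁}) = ∫₀^∞ c(x,y) d(x^{−2γ₁}). -/
/-!
Write `μ_γ` for the measure `-d(x^{-γ})` on `(0, ∞)`, so that `μ_γ (x, ∞) = μ_γ [x, ∞) = x^{-γ}`.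
Splitting the square according to which coordinate realises the minimum and applying Tonelli,
`∫∫ F (x₁ ⊓ x₂) dμ_γ dμ_γ = ∫ F(x) (μ_γ [x, ∞) + μ_γ (x, ∞)) dμ_γ(x) = ∫ F(x) 2x^{-γ} γ x^{-γ-1} dx`,
which is `∫ F dμ_{2γ}`. For `F ≥ 0` this is an identity in `[0, ∞]`; integrability of `F` against
`μ_{2γ}` makes both sides finite, so it passes to Bochner integrals.
-/

open Real MeasureTheory Set Function
open scoped ENNReal

theorem lintegral_lintegral_comp_min {α : Type*} [MeasurableSpace α] [LinearOrder α]
    [TopologicalSpace α] [OrderClosedTopology α] [SecondCountableTopology α]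
    [OpensMeasurableSpace α] {μ : Measure α} [SFinite μ] {F : α → ℝ≥0∞} (hF : Measurable F) :
    ∫⁻ x₂, ∫⁻ x₁, F (min x₁ x₂) ∂μ ∂μ = ∫⁻ x, F x * (μ (Ici x) + μ (Ioi x)) ∂μ := by
  set A : α → α → ℝ≥0∞ := fun x₂ x₁ => (Ici x₁).indicator (fun _ => F x₁) x₂
  set B : α → α → ℝ≥0∞ := fun x₂ x₁ => (Ioi x₂).indicator (fun _ => F x₂) x₁
  have hsplit : ∀ x₁ x₂, F (min x₁ x₂) = A x₂ x₁ + B x₂ x₁ := by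
    intro x₁ x₂
    rcases le_or_gt x₁ x₂ with h | h
    · simp [A, B, h, not_lt.2 h]
    · simp [A, B, h, min_eq_right h.le, not_le.2 h]
  have hA : Measurable (uncurry A) :=
    (hF.comp measurable_snd).indicator (measurableSet_le measurable_snd measurable_fst)
  calc ∫⁻ x₂, ∫⁻ x₁, F (min x₁ x₂) ∂μ ∂μ
      = ∫⁻ x₂, ∫⁻ x₁, A x₂ x₁ ∂μ ∂μ + ∫⁻ x₂, ∫⁻ x₁, B x₂ x₁ ∂μ ∂μ := by
        simp_rw [hsplit]
        have hA₁ : Measurable fun x₂ => ∫⁻ x₁, A x₂ x₁ ∂μ := hA.lintegral_prod_right'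
        rw [← lintegral_add_left hA₁]
        exact lintegral_congr fun x₂ => lintegral_add_left (hA.comp measurable_prodMk_left) _
    _ = ∫⁻ x, (∫⁻ x₂, A x₂ x ∂μ + ∫⁻ x₁, B x x₁ ∂μ) ∂μ := by
        have hA₂ : Measurable fun x => ∫⁻ x₂, A x₂ x ∂μ := hA.lintegral_prod_left'
        rw [lintegral_lintegral_swap hA.aemeasurable, lintegral_add_left hA₂]
    _ = ∫⁻ x, F x * (μ (Ici x) + μ (Ioi x)) ∂μ := by
        simp only [A, B, lintegral_indicator_const measurableSet_Ici,
          lintegral_indicator_const measurableSet_Ioi, mul_add]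

theorem integral_integral_eq_toReal_lintegral_lintegral {α β : Type*} [MeasurableSpace α]
    [MeasurableSpace β] {μ : Measure α} {ν : Measure β} [SFinite μ] [SFinite ν]
    {f : α → β → ℝ} (hf : Measurable (uncurry f)) (h0 : ∀ x y, 0 ≤ f x y)
    (hfin : ∫⁻ x, ∫⁻ y, ENNReal.ofReal (f x y) ∂ν ∂μ ≠ ∞) :
    ∫ x, ∫ y, f x y ∂ν ∂μ = (∫⁻ x, ∫⁻ y, ENNReal.ofReal (f x y) ∂ν ∂μ).toReal := by
  have hprod : ∫⁻ z, ENNReal.ofReal (uncurry f z) ∂μ.prod ν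
      = ∫⁻ x, ∫⁻ y, ENNReal.ofReal (f x y) ∂ν ∂μ :=
    lintegral_prod _ hf.ennreal_ofReal.aemeasurable
  have hint : Integrable (uncurry f) (μ.prod ν) :=
    ⟨hf.aestronglyMeasurable, (hasFiniteIntegral_iff_ofReal
      (ae_of_all _ fun z : α × β => h0 z.1 z.2)).2 (hprod ▸ hfin.lt_top)⟩
  rw [integral_integral hint, ← hprod]
  exact integral_eq_lintegral_of_nonneg_ae (ae_of_all _ fun z => h0 z.1 z.2) hf.aestronglyMeasurable

/-- The Stieltjes measure `-d(x^{-γ})` on `(0, ∞)`. -/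
noncomputable def powerTailMeasure (γ : ℝ) : Measure ℝ :=
  (volume.restrict (Ioi 0)).withDensity fun x => ENNReal.ofReal (γ * x ^ (-γ - 1))

section PowerTail

variable {γ : ℝ}

instance : SFinite (powerTailMeasure γ) := by
  unfold powerTailMeasure; infer_instance

instance : NullSingletonClass (powerTailMeasure γ) := by
  unfold powerTailMeasure; infer_instance

theorem powerTailMeasure_Ioi (hγ : 0 < γ) {a : ℝ} (ha : 0 < a) :
    powerTailMeasure γ (Ioi a) = ENNReal.ofReal (a ^ (-γ)) := by
  rw [powerTailMeasure, withDensity_apply _ measurableSet_Ioi,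
    Measure.restrict_restrict measurableSet_Ioi, inter_eq_left.2 (Ioi_subset_Ioi ha.le),
    ← ofReal_integral_eq_lintegral_ofReal]
  · rw [integral_const_mul, integral_Ioi_rpow_of_lt (by linarith) ha, sub_add_cancel]
    field_simp
  · exact (integrableOn_Ioi_rpow_of_lt (by linarith) ha).const_mul γ
  · filter_upwards [ae_restrict_mem measurableSet_Ioi] with x hx
    exact mul_nonneg hγ.le (rpow_nonneg (ha.trans hx).le _)

theorem powerTailMeasure_Ici (hγ : 0 < γ) {a : ℝ} (ha : 0 < a) :
    powerTailMeasure γ (Ici a) = ENNReal.ofReal (a ^ (-γ)) := by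
  rw [← measure_congr Ioi_ae_eq_Ici, powerTailMeasure_Ioi hγ ha]

theorem lintegral_powerTailMeasure {F : ℝ → ℝ≥0∞} (hF : Measurable F) :
    ∫⁻ x, F x ∂powerTailMeasure γ = ∫⁻ x in Ioi 0, ENNReal.ofReal (γ * x ^ (-γ - 1)) * F x :=
  lintegral_withDensity_eq_lintegral_mul _ (by fun_prop) hF

theorem integral_powerTailMeasure (hγ : 0 ≤ γ) (f : ℝ → ℝ) :
    ∫ x, f x ∂powerTailMeasure γ = ∫ x in Ioi 0, f x * γ * x ^ (-γ - 1) := by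
  rw [powerTailMeasure, integral_withDensity_eq_integral_toReal_smul (by fun_prop)
    (ae_of_all _ fun _ => ENNReal.ofReal_lt_top)]
  refine setIntegral_congr_fun measurableSet_Ioi fun x hx => ?_
  rw [ENNReal.toReal_ofReal (mul_nonneg hγ (rpow_nonneg (le_of_lt hx) _)), smul_eq_mul]
  ring

theorem integrable_powerTailMeasure_iff (hγ : 0 ≤ γ) {f : ℝ → ℝ} :
    Integrable f (powerTailMeasure γ) ↔
      IntegrableOn (fun x => f x * γ * x ^ (-γ - 1)) (Ioi 0) := by
  rw [powerTailMeasure, integrable_withDensity_iff (by fun_prop)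
    (ae_of_all _ fun _ => ENNReal.ofReal_lt_top)]
  refine integrable_congr ?_
  filter_upwards [ae_restrict_mem measurableSet_Ioi] with x hx
  rw [ENNReal.toReal_ofReal (mul_nonneg hγ (rpow_nonneg (le_of_lt hx) _)), mul_assoc]

theorem lintegral_lintegral_comp_min_powerTailMeasure (hγ : 0 < γ) {F : ℝ → ℝ≥0∞}
    (hF : Measurable F) :
    ∫⁻ x₂, ∫⁻ x₁, F (min x₁ x₂) ∂powerTailMeasure γ ∂powerTailMeasure γ
      = ∫⁻ x, F x ∂powerTailMeasure (2 * γ) := by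
  have hIci : Measurable fun x => powerTailMeasure γ (Ici x) :=
    Antitone.measurable fun _ _ h => measure_mono (Ici_subset_Ici.2 h)
  have hIoi : Measurable fun x => powerTailMeasure γ (Ioi x) :=
    Antitone.measurable fun _ _ h => measure_mono (Ioi_subset_Ioi h)
  rw [lintegral_lintegral_comp_min hF, lintegral_powerTailMeasure (by fun_prop),
    lintegral_powerTailMeasure hF]
  refine setLIntegral_congr_fun measurableSet_Ioi fun x hx => ?_
  rw [powerTailMeasure_Ici hγ hx, powerTailMeasure_Ioi hγ hx, mul_comm (F x), ← mul_assoc]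
  congr 1
  rw [← ENNReal.ofReal_add (rpow_nonneg hx.le _) (rpow_nonneg hx.le _),
    ← ENNReal.ofReal_mul (mul_nonneg hγ.le (rpow_nonneg hx.le _))]
  congr 1
  rw [show -(2 * γ) - 1 = (-γ - 1) + -γ by ring, rpow_add hx]
  ring

theorem integral_integral_comp_min_powerTailMeasure (hγ : 0 < γ) {f : ℝ → ℝ}
    (hf : Measurable f) (h0 : ∀ x, 0 ≤ f x) (hint : Integrable f (powerTailMeasure (2 * γ))) :
    ∫ x₂, ∫ x₁, f (min x₁ x₂) ∂powerTailMeasure γ ∂powerTailMeasure γ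
      = ∫ x, f x ∂powerTailMeasure (2 * γ) := by
  have hlin := lintegral_lintegral_comp_min_powerTailMeasure hγ hf.ennreal_ofReal
  rw [integral_integral_eq_toReal_lintegral_lintegral
      (f := fun x₂ x₁ => f (min x₁ x₂))
      (hf.comp (measurable_snd.min measurable_fst)) (fun _ _ => h0 _)
      (hlin ▸ hint.lintegral_lt_top.ne),
    hlin, integral_eq_lintegral_of_nonneg_ae (ae_of_all _ h0) hf.aestronglyMeasurable]

end PowerTail

theorem stmt_1_general (γ₁ : ℝ) (hγ₁ : 0 < γ₁) (y : ℝ) (c : ℝ → ℝ → ℝ)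
    (hmeas : Measurable fun x => c x y)
    (hnonneg : ∀ x y' : ℝ, 0 ≤ c x y')
    (hint : IntegrableOn (fun x => c x y * (2 * γ₁) * x ^ (-(2 * γ₁) - 1)) (Set.Ioi (0 : ℝ))) :
    ∫ x₂ in Set.Ioi (0 : ℝ),
        (∫ x₁ in Set.Ioi (0 : ℝ), c (min x₁ x₂) y * γ₁ * x₁ ^ (-γ₁ - 1)) * γ₁ * x₂ ^ (-γ₁ - 1)
      = ∫ x in Set.Ioi (0 : ℝ), c x y * (2 * γ₁) * x ^ (-(2 * γ₁) - 1) := by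
  have h2γ₁ : 0 ≤ 2 * γ₁ := by positivity
  simp_rw [← integral_powerTailMeasure hγ₁.le, ← integral_powerTailMeasure h2γ₁]
  exact integral_integral_comp_min_powerTailMeasure hγ₁ hmeas (fun x => hnonneg x y)
    ((integrable_powerTailMeasure_iff h2γ₁).2 hint)

/-- Fubini-type identity for the min of two Stieltjes variables.
The Stieltjes integral `∫₀^∞ f(x) d(x^{-ργ₁})` is rendered (up to the common
sign convention) as `ργ₁ ∫₀^∞ f(x) x^{-ργ₁-1} dx`. -/
theorem stmt_1 (γ₁ : ℝ) (hγ₁ : 0 < γ₁) (y : ℝ) (hy : 0 < y) (c : ℝ → ℝ → ℝ)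
    (hmeas : Measurable fun x => c x y)
    (hnonneg : ∀ x y' : ℝ, 0 ≤ c x y')
    (hmono : MonotoneOn (fun x => c x y) (Set.Ioi (0 : ℝ)))
    (hint : IntegrableOn (fun x => c x y * (2 * γ₁) * x ^ (-(2 * γ₁) - 1)) (Set.Ioi (0 : ℝ))) :
    ∫ x₂ in Set.Ioi (0 : ℝ),
        (∫ x₁ in Set.Ioi (0 : ℝ), c (min x₁ x₂) y * γ₁ * x₁ ^ (-γ₁ - 1)) * γ₁ * x₂ ^ (-γ₁ - 1)
      = ∫ x in Set.Ioi (0 : ℝ), c x y * (2 * γ₁) * x ^ (-(2 * γ₁) - 1) :=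
  stmt_1_general γ₁ hγ₁ y c hmeas hnonneg hint
end

section
/- Let X be a positive random variable with E[X] < ∞ and tail quantile U₁, and let s_n(x) = (n/k)[1 − F₁(U₁(n/k) x^{−γ₁})] where F₁ is the distribution function of X, γ₁ ∈ (0,1), and k = k(n) is an intermediate sequence (k → ∞, k/n → 0). Then for any β₂ ∈ (0,1), ∫₁^∞ s_n(x)^{β₂} d(−x^{−γ₁}) ≤ (n/k)^{β₂} · [ (1/U₁(n/k)) ∫₀^{U₁(n/k)} P(X > x) dx ]^{β₂}, and consequently this integral is O((n/k)^{β₂(1−γ₁)}) whenever U₁(t)/t^{γ₁} → d ∈ (0,∞). -/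
open Real Filter MeasureTheory Asymptotics

/-- bound on `∫₁^∞ s_t(x)^{β₂} d(-x^{-γ₁})`, where
`s_t(x) = t (1 - F₁(U₁(t) x^{-γ₁}))`, via a change of variables and Jensen's
inequality; consequently the integral is `O(t^{β₂(1-γ₁)})` as `t → ∞`
when `U₁(t)/t^{γ₁} → d ∈ (0,∞)`.  Here `t` stands for `n/k`, and the
Stieltjes integral `∫₁^∞ h(x) d(-x^{-γ₁})` is `γ₁ ∫₁^∞ h(x) x^{-γ₁-1} dx`. -/
theorem stmt_6 {Ω : Type*} [MeasurableSpace Ω] (μ : Measure Ω) [IsProbabilityMeasure μ]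
    (X : Ω → ℝ) (hXm : Measurable X) (hXpos : ∀ᵐ ω ∂μ, 0 < X ω) (hXint : Integrable X μ)
    (F₁ U₁ : ℝ → ℝ) (hF₁ : ∀ x : ℝ, F₁ x = (μ {ω | X ω ≤ x}).toReal)
    (hU₁pos : ∀ t : ℝ, 0 < t → 0 < U₁ t)
    (γ₁ β₂ d : ℝ) (hγ₁ : 0 < γ₁ ∧ γ₁ < 1) (hβ₂ : 0 < β₂ ∧ β₂ < 1) (hd : 0 < d) :
    (∀ t : ℝ, 1 < t →
      γ₁ * ∫ x in Set.Ioi (1 : ℝ),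
          (t * (1 - F₁ (U₁ t * x ^ (-γ₁)))) ^ β₂ * x ^ (-γ₁ - 1)
        ≤ t ^ β₂ *
          ((1 / U₁ t) * ∫ x in Set.Ioo (0 : ℝ) (U₁ t), (μ {ω | X ω > x}).toReal) ^ β₂) ∧
    (Tendsto (fun t => U₁ t / t ^ γ₁) atTop (nhds d) →
      (fun t => γ₁ * ∫ x in Set.Ioi (1 : ℝ),
          (t * (1 - F₁ (U₁ t * x ^ (-γ₁)))) ^ β₂ * x ^ (-γ₁ - 1))
        =O[atTop] fun t => t ^ (β₂ * (1 - γ₁))) := by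
  obtain ⟨hγ0, hγ1⟩ := hγ₁
  obtain ⟨hβ0, hβ1⟩ := hβ₂
  -- the tail function
  have hGnonneg : ∀ x : ℝ, 0 ≤ (μ {ω | X ω > x}).toReal := fun x => ENNReal.toReal_nonneg
  have hGanti : Antitone (fun x : ℝ => (μ {ω | X ω > x}).toReal) := fun a b hab =>
    ENNReal.toReal_mono (measure_ne_top μ _)
      (measure_mono (fun ω h => lt_of_le_of_lt hab h))
  have hGmeas : Measurable (fun x : ℝ => (μ {ω | X ω > x}).toReal) := hGanti.measurable
  have hF₁mono : Monotone F₁ := by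
    intro a b hab; rw [hF₁, hF₁]
    exact ENNReal.toReal_mono (measure_ne_top μ _) (measure_mono fun ω h => le_trans h hab)
  have hF₁meas : Measurable F₁ := hF₁mono.measurable
  have hsub : ∀ x : ℝ, 1 - F₁ x = (μ {ω | X ω > x}).toReal := by
    intro x
    have hms : MeasurableSet {ω | X ω ≤ x} := hXm measurableSet_Iic
    have hcompl : {ω | X ω > x} = {ω | X ω ≤ x}ᶜ := by ext ω; simp [not_le]
    rw [hF₁, hcompl, measure_compl hms (measure_ne_top μ _),
      ENNReal.toReal_sub_of_le (measure_mono (Set.subset_univ _)) (measure_ne_top μ _)]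
    simp
  have hF01 : ∀ x : ℝ, 0 ≤ 1 - F₁ x ∧ 1 - F₁ x ≤ 1 := by
    intro x
    refine ⟨by rw [hsub]; exact hGnonneg x, ?_⟩
    have : (0:ℝ) ≤ F₁ x := by rw [hF₁]; exact ENNReal.toReal_nonneg
    linarith
  -- Part 1
  have main : ∀ t : ℝ, 1 < t →
      γ₁ * ∫ x in Set.Ioi (1 : ℝ),
          (t * (1 - F₁ (U₁ t * x ^ (-γ₁)))) ^ β₂ * x ^ (-γ₁ - 1)
        ≤ t ^ β₂ *
          ((1 / U₁ t) * ∫ x in Set.Ioo (0 : ℝ) (U₁ t), (μ {ω | X ω > x}).toReal) ^ β₂ := by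
    intro t ht
    have ht0 : (0:ℝ) < t := by linarith
    have hc0 : 0 < U₁ t := hU₁pos t ht0
    set c := U₁ t with hc
    set h : ℝ → ℝ := fun y => t * (1 - F₁ (c * y)) with hh
    have hh01 : ∀ y : ℝ, 0 ≤ h y ∧ h y ≤ t := fun y =>
      ⟨mul_nonneg ht0.le (hF01 _).1, mul_le_of_le_one_right ht0.le (hF01 _).2⟩
    -- change of variables x ↦ x^(-γ₁) from Ioi 1 to Ioo 0 1
    have himg : (fun x : ℝ => x ^ (-γ₁)) '' Set.Ioi 1 = Set.Ioo 0 1 := by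
      ext y
      constructor
      · rintro ⟨x, hx, rfl⟩
        have hx1 : (1:ℝ) < x := hx
        exact ⟨Real.rpow_pos_of_pos (by linarith) _,
          Real.rpow_lt_one_of_one_lt_of_neg hx1 (by linarith)⟩
      · rintro ⟨hy0, hy1⟩
        refine ⟨y ^ (-γ₁⁻¹), ?_, ?_⟩
        · have : (1:ℝ) < y ^ (-γ₁⁻¹) := by
            rw [Real.one_lt_rpow_iff_of_pos hy0]
            exact Or.inr ⟨hy1, by simp [hγ0, inv_pos.2 hγ0]⟩
          exact this
        · show (y ^ (-γ₁⁻¹)) ^ (-γ₁) = y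
          rw [← Real.rpow_mul hy0.le]
          rw [show (-γ₁⁻¹) * (-γ₁) = 1 by field_simp]
          exact Real.rpow_one y
    have hderiv : ∀ x ∈ Set.Ioi (1:ℝ), HasDerivWithinAt (fun x : ℝ => x ^ (-γ₁))
        (-γ₁ * x ^ (-γ₁ - 1)) (Set.Ioi 1) x := by
      intro x hx
      have hx1 : (1:ℝ) < x := hx
      exact (Real.hasDerivAt_rpow_const (p := -γ₁)
        (Or.inl (by linarith : x ≠ 0))).hasDerivWithinAt
    have hinj : Set.InjOn (fun x : ℝ => x ^ (-γ₁)) (Set.Ioi 1) := by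
      have hsa : StrictAntiOn (fun x : ℝ => x ^ (-γ₁)) (Set.Ioi 1) := by
        intro a ha b hb hab
        have ha1 : (1:ℝ) < a := ha
        exact Real.rpow_lt_rpow_of_neg (by linarith) hab (by linarith)
      exact hsa.injOn
    have hcv : ∫ y in Set.Ioo (0:ℝ) 1, (h y) ^ β₂
        = ∫ x in Set.Ioi (1:ℝ), |(-γ₁) * x ^ (-γ₁ - 1)| • (h (x ^ (-γ₁))) ^ β₂ := by
      rw [← himg]
      exact integral_image_eq_integral_abs_deriv_smul measurableSet_Ioi hderiv hinj
        (fun y => (h y) ^ β₂)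
    have hLHS : γ₁ * ∫ x in Set.Ioi (1 : ℝ),
        (t * (1 - F₁ (c * x ^ (-γ₁)))) ^ β₂ * x ^ (-γ₁ - 1)
        = ∫ y in Set.Ioo (0:ℝ) 1, (h y) ^ β₂ := by
      rw [hcv, ← integral_const_mul]
      apply setIntegral_congr_fun measurableSet_Ioi
      intro x hx
      have hx1 : (1:ℝ) < x := hx
      have hx0 : (0:ℝ) < x := by linarith
      have habs : |(-γ₁) * x ^ (-γ₁ - 1)| = γ₁ * x ^ (-γ₁ - 1) := by
        rw [abs_mul, abs_neg, abs_of_pos hγ0, abs_of_pos (Real.rpow_pos_of_pos hx0 _)]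
      show γ₁ * ((t * (1 - F₁ (c * x ^ (-γ₁)))) ^ β₂ * x ^ (-γ₁ - 1))
        = |(-γ₁) * x ^ (-γ₁ - 1)| • (t * (1 - F₁ (c * x ^ (-γ₁)))) ^ β₂
      rw [habs, smul_eq_mul]
      ring
    -- Jensen's inequality on the probability space Ioo 0 1
    have hprob : IsProbabilityMeasure (volume.restrict (Set.Ioo (0:ℝ) 1)) := by
      constructor
      simp [Real.volume_Ioo]
    have hhmeas : Measurable h :=
      (measurable_const.sub (hF₁meas.comp (measurable_const_mul c))).const_mul t
    have hfi : Integrable h (volume.restrict (Set.Ioo (0:ℝ) 1)) := by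
      refine ⟨hhmeas.aestronglyMeasurable, HasFiniteIntegral.of_bounded (C := t) ?_⟩
      exact ae_of_all _ fun y => by
        rw [Real.norm_eq_abs, abs_of_nonneg (hh01 y).1]; exact (hh01 y).2
    have hgm : Measurable (fun y => (h y) ^ β₂) := by measurability
    have hgi : Integrable ((fun u : ℝ => u ^ β₂) ∘ h) (volume.restrict (Set.Ioo (0:ℝ) 1)) := by
      refine ⟨hgm.aestronglyMeasurable, HasFiniteIntegral.of_bounded (C := t ^ β₂) ?_⟩
      refine ae_of_all _ fun y => ?_
      show ‖(h y) ^ β₂‖ ≤ t ^ β₂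
      rw [Real.norm_eq_abs, abs_of_nonneg (Real.rpow_nonneg (hh01 y).1 _)]
      exact Real.rpow_le_rpow (hh01 y).1 (hh01 y).2 hβ0.le
    have hcont : ContinuousOn (fun u : ℝ => u ^ β₂) (Set.Ici 0) := fun x _ =>
      (Real.continuousAt_rpow_const x β₂ (Or.inr hβ0.le)).continuousWithinAt
    have hjensen := (Real.concaveOn_rpow hβ0.le hβ1.le).le_map_integral hcont isClosed_Ici
      (ae_of_all _ fun y => (hh01 y).1) hfi hgi
    -- compute the mean
    have hmean : ∫ y in Set.Ioo (0:ℝ) 1, h y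
        = t * ((1 / c) * ∫ x in Set.Ioo (0:ℝ) c, (μ {ω | X ω > x}).toReal) := by
      have h1 : ∫ y in Set.Ioo (0:ℝ) 1, (1 - F₁ (c * y))
          = (1/c) * ∫ x in Set.Ioo (0:ℝ) c, (μ {ω | X ω > x}).toReal := by
        have e1 : ∫ y in Set.Ioo (0:ℝ) 1, (1 - F₁ (c * y))
            = ∫ y in (0:ℝ)..1, (1 - F₁ (c * y)) := by
          rw [intervalIntegral.integral_of_le zero_le_one, integral_Ioc_eq_integral_Ioo]
        have e2 := intervalIntegral.integral_comp_mul_left (a := (0:ℝ)) (b := 1)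
          (fun x => 1 - F₁ x) hc0.ne'
        rw [e1, e2, mul_zero, mul_one, smul_eq_mul,
          intervalIntegral.integral_of_le hc0.le, integral_Ioc_eq_integral_Ioo, one_div]
        congr 1
        exact setIntegral_congr_fun measurableSet_Ioo fun x _ => hsub x
      calc ∫ y in Set.Ioo (0:ℝ) 1, h y
          = t * ∫ y in Set.Ioo (0:ℝ) 1, (1 - F₁ (c * y)) := integral_const_mul t _
        _ = t * ((1 / c) * ∫ x in Set.Ioo (0:ℝ) c, (μ {ω | X ω > x}).toReal) := by rw [h1]
    have hIc0 : 0 ≤ (1 / c) * ∫ x in Set.Ioo (0:ℝ) c, (μ {ω | X ω > x}).toReal :=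
      mul_nonneg (by positivity)
        (setIntegral_nonneg measurableSet_Ioo fun x _ => hGnonneg x)
    calc γ₁ * ∫ x in Set.Ioi (1 : ℝ),
          (t * (1 - F₁ (c * x ^ (-γ₁)))) ^ β₂ * x ^ (-γ₁ - 1)
        = ∫ y in Set.Ioo (0:ℝ) 1, (h y) ^ β₂ := hLHS
      _ ≤ (∫ y in Set.Ioo (0:ℝ) 1, h y) ^ β₂ := hjensen
      _ = (t * ((1 / c) * ∫ x in Set.Ioo (0:ℝ) c, (μ {ω | X ω > x}).toReal)) ^ β₂ := by
          rw [hmean]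
      _ = t ^ β₂ * ((1 / c) * ∫ x in Set.Ioo (0:ℝ) c, (μ {ω | X ω > x}).toReal) ^ β₂ :=
          Real.mul_rpow ht0.le hIc0
  refine ⟨main, ?_⟩
  -- Part 2
  intro hten
  set M : ℝ := (∫⁻ ω, ENNReal.ofReal (X ω) ∂μ).toReal with hMdef
  have hM0 : 0 ≤ M := ENNReal.toReal_nonneg
  have hXnn : 0 ≤ᵐ[μ] X := hXpos.mono fun ω h => h.le
  have hfin : ∫⁻ ω, ENNReal.ofReal (X ω) ∂μ < ⊤ := hXint.lintegral_lt_top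
  have hlayer : ∫⁻ ω, ENNReal.ofReal (X ω) ∂μ = ∫⁻ x in Set.Ioi 0, μ {ω | x < X ω} :=
    lintegral_eq_lintegral_meas_lt μ hXnn hXm.aemeasurable
  have hMB : ∀ s : ℝ, (∫ x in Set.Ioo (0:ℝ) s, (μ {ω | X ω > x}).toReal) ≤ M := by
    intro s
    rw [integral_eq_lintegral_of_nonneg_ae (ae_of_all _ hGnonneg)
      hGmeas.aestronglyMeasurable, hMdef, hlayer]
    apply ENNReal.toReal_mono
    · rw [← hlayer]; exact hfin.ne
    · calc ∫⁻ x in Set.Ioo (0:ℝ) s, ENNReal.ofReal ((μ {ω | X ω > x}).toReal)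
          = ∫⁻ x in Set.Ioo (0:ℝ) s, μ {ω | x < X ω} := by
            apply lintegral_congr fun x => ?_
            rw [ENNReal.ofReal_toReal (measure_ne_top μ _)]
        _ ≤ ∫⁻ x in Set.Ioi (0:ℝ), μ {ω | x < X ω} :=
            lintegral_mono_set Set.Ioo_subset_Ioi_self
  have hev : ∀ᶠ t in atTop, d / 2 * t ^ γ₁ ≤ U₁ t := by
    have h2 : ∀ᶠ t in atTop, d / 2 ≤ U₁ t / t ^ γ₁ :=
      hten.eventually (eventually_ge_nhds (by linarith))
    filter_upwards [h2, eventually_gt_atTop (0:ℝ)] with t h2t ht0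
    have htg : (0:ℝ) < t ^ γ₁ := Real.rpow_pos_of_pos ht0 _
    exact (le_div_iff₀ htg).1 h2t
  rw [Asymptotics.isBigO_iff]
  refine ⟨(2 * M / d) ^ β₂, ?_⟩
  filter_upwards [eventually_ge_atTop (2:ℝ), hev] with t ht2 hUt
  have ht1 : (1:ℝ) < t := by linarith
  have ht0 : (0:ℝ) < t := by linarith
  have hc0 : 0 < U₁ t := hU₁pos t ht0
  have htg : (0:ℝ) < t ^ γ₁ := Real.rpow_pos_of_pos ht0 _
  have key := main t ht1
  have hI0 : 0 ≤ (1 / U₁ t) * ∫ x in Set.Ioo (0:ℝ) (U₁ t), (μ {ω | X ω > x}).toReal :=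
    mul_nonneg (by positivity)
      (setIntegral_nonneg measurableSet_Ioo fun x _ => hGnonneg x)
  have hIle : (1 / U₁ t) * (∫ x in Set.Ioo (0:ℝ) (U₁ t), (μ {ω | X ω > x}).toReal)
      ≤ 2 * M / d * t ^ (-γ₁) := by
    have h1 : (1 / U₁ t) * (∫ x in Set.Ioo (0:ℝ) (U₁ t), (μ {ω | X ω > x}).toReal)
        ≤ (1 / U₁ t) * M := mul_le_mul_of_nonneg_left (hMB _) (by positivity)
    have h3 : M / U₁ t ≤ M / (d / 2 * t ^ γ₁) :=
      div_le_div_of_nonneg_left hM0 (by positivity) hUt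
    have h4 : M / (d / 2 * t ^ γ₁) = 2 * M / d * t ^ (-γ₁) := by
      rw [Real.rpow_neg ht0.le]
      field_simp
    have h2 : 1 / U₁ t * M = M / U₁ t := by ring
    linarith
  have hbound : γ₁ * ∫ x in Set.Ioi (1 : ℝ),
      (t * (1 - F₁ (U₁ t * x ^ (-γ₁)))) ^ β₂ * x ^ (-γ₁ - 1)
      ≤ (2 * M / d) ^ β₂ * t ^ (β₂ * (1 - γ₁)) := by
    have step : t ^ β₂ *
        ((1 / U₁ t) * ∫ x in Set.Ioo (0:ℝ) (U₁ t), (μ {ω | X ω > x}).toReal) ^ β₂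
        ≤ t ^ β₂ * (2 * M / d * t ^ (-γ₁)) ^ β₂ :=
      mul_le_mul_of_nonneg_left (Real.rpow_le_rpow hI0 hIle hβ0.le)
        (Real.rpow_nonneg ht0.le _)
    have heq : t ^ β₂ * (2 * M / d * t ^ (-γ₁)) ^ β₂
        = (2 * M / d) ^ β₂ * t ^ (β₂ * (1 - γ₁)) := by
      rw [Real.mul_rpow (by positivity) (Real.rpow_nonneg ht0.le _),
        ← Real.rpow_mul ht0.le, ← mul_assoc, mul_comm (t ^ β₂), mul_assoc,
        ← Real.rpow_add ht0]
      congr 1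
      ring
    calc γ₁ * ∫ x in Set.Ioi (1 : ℝ),
          (t * (1 - F₁ (U₁ t * x ^ (-γ₁)))) ^ β₂ * x ^ (-γ₁ - 1)
        ≤ t ^ β₂ *
          ((1 / U₁ t) * ∫ x in Set.Ioo (0:ℝ) (U₁ t), (μ {ω | X ω > x}).toReal) ^ β₂ := key
      _ ≤ t ^ β₂ * (2 * M / d * t ^ (-γ₁)) ^ β₂ := step
      _ = (2 * M / d) ^ β₂ * t ^ (β₂ * (1 - γ₁)) := heq
  have hLnn : 0 ≤ γ₁ * ∫ x in Set.Ioi (1 : ℝ),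
      (t * (1 - F₁ (U₁ t * x ^ (-γ₁)))) ^ β₂ * x ^ (-γ₁ - 1) := by
    apply mul_nonneg hγ0.le
    apply setIntegral_nonneg measurableSet_Ioi
    intro x hx
    have hx0 : (0:ℝ) < x := lt_trans zero_lt_one hx
    exact mul_nonneg (Real.rpow_nonneg (mul_nonneg ht0.le (hF01 _).1) _)
      (Real.rpow_nonneg hx0.le _)
  rw [Real.norm_eq_abs, Real.norm_eq_abs, abs_of_nonneg hLnn,
    abs_of_nonneg (Real.rpow_nonneg ht0.le _)]
  exact hbound
end

section
/- Assume X takes values in (0,∞), its tail quantile function U₁ satisfies U₁(t)/t^{γ₁} → d ∈ (0,∞) with γ₁ > 0, and the dependence functions c_t(x,y) = t^{1/η} P(X > U₁(t/x), Y > U₂(t/y)) converge to a continuous limit c(x,1) in the first argument uniformly in the senses: sup_{x≤1}|c_t(x,1)−c(x,1)|x^{−β₁} → 0 for some β₁ > γ₁, and sup_{1<x<t}|c_t(x,1)−c(x,1)|x^{−β₂} → 0 for some 0 < β₂ < γ₁. If η ∈ (1/2,1], −1/η + 1 + γ₁ > 0, and ∫₀^∞ c(x^{−1/γ₁}, 1)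 dx < ∞, then lim_{t→∞} θ_{1/t} / ( t^{−1/η + 1} U₁(t) ) = ∫₀^∞ c(x^{−1/γ₁}, 1) dx, where θ_{1/t} = E[X | Y > U₂(t)]. -/
open Real Filter MeasureTheory Set Topology

/-!
The layer-cake formula and the substitution `s = U₁(t) u` turn the normalised expected shortfall
into `∫₀^∞ t^{1/η} P(X > U₁(t) u, Y > U₂(t)) du`. Since `U₁(tk)/U₁(t) → k^{γ₁}`, the integrand is
squeezed between values `c_t(x, 1)` with `x` on either side of `u^{-1/γ₁}`, so by continuity of
`c(·, 1)` it tends to `c(u^{-1/γ₁}, 1)`. Above a cut-off of order `t^{-γ₁}` a Potter-type bound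
`U₁(tk) ≤ 2 k^{γ₁} U₁(t)` together with the uniform bounds on `c_t - c` dominates the integrand by
`c(x, 1) + min(x^{β₁}, x^{β₂})` at `x = (u/2)^{-1/γ₁}`, which is integrable because
`β₂ < γ₁ < β₁`. Below the cut-off the integrand is at most `t^{1/η - 1}`, so that piece is
`O(t^{1/η - 1 - γ₁}) → 0`.
-/

theorem setIntegral_eq_mul_integral_measureReal_gt {Ω : Type*} [MeasurableSpace Ω]
    {μ : Measure Ω} {X : Ω → ℝ} (hX : Integrable X μ) (hX_nonneg : 0 ≤ᵐ[μ] X)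
    {A : Set Ω} (hA : MeasurableSet A) {a : ℝ} (ha : 0 < a) :
    ∫ ω in A, X ω ∂μ = a * ∫ u in Ioi 0, μ.real ({ω | a * u < X ω} ∩ A) := by
  have hscale := integral_comp_mul_left_Ioi (fun s => μ.real ({ω | s < X ω} ∩ A)) 0 ha
  rw [mul_zero, smul_eq_mul] at hscale
  rw [hX.restrict.integral_eq_integral_meas_lt (ae_restrict_of_ae hX_nonneg), hscale,
    mul_inv_cancel_left₀ ha.ne']
  simp only [measureReal_def, Measure.restrict_apply' hA]

theorem eventually_pos_of_tendsto_div_rpow {U : ℝ → ℝ} {γ d : ℝ} (hd : 0 < d)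
    (hU : Tendsto (fun t => U t / t ^ γ) atTop (𝓝 d)) : ∀ᶠ t in atTop, 0 < U t := by
  filter_upwards [hU.eventually (eventually_gt_nhds hd), eventually_gt_atTop 0] with t h ht
  exact (div_pos_iff_of_pos_right (rpow_pos_of_pos ht γ)).1 h

theorem tendsto_div_div_of_tendsto_div_rpow {U : ℝ → ℝ} {γ d : ℝ} (hd : 0 < d)
    (hU : Tendsto (fun t => U t / t ^ γ) atTop (𝓝 d)) {x : ℝ} (hx : 0 < x) :
    Tendsto (fun t => U (t / x) / U t) atTop (𝓝 (x ^ (-γ))) := by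
  have h :=
    ((hU.comp (tendsto_id.atTop_div_const hx)).div hU hd.ne').mul_const (x ^ (-γ))
  rw [div_self hd.ne', one_mul] at h
  refine h.congr' ?_
  filter_upwards [eventually_pos_of_tendsto_div_rpow hd hU, eventually_gt_atTop 0]
    with t hUt ht
  have htγ : 0 < t ^ γ := rpow_pos_of_pos ht γ
  have hxγ : 0 < x ^ γ := rpow_pos_of_pos hx γ
  simp only [Pi.div_apply, Function.comp_apply, id]
  rw [div_rpow ht.le hx.le, rpow_neg hx.le]
  field_simp

theorem eventually_le_two_mul_of_tendsto {f : ℝ → ℝ} {d : ℝ} (hd : 0 < d)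
    (hf : Tendsto f atTop (𝓝 d)) : ∀ᶠ S in atTop, ∀ s ≥ S, ∀ t ≥ S, f s ≤ 2 * f t := by
  obtain ⟨S, hS⟩ := eventually_atTop.1 <|
    (hf.eventually (eventually_lt_nhds (show d < 4 / 3 * d by linarith))).and
      (hf.eventually (eventually_gt_nhds (show 2 / 3 * d < d by linarith)))
  filter_upwards [eventually_ge_atTop S] with S' hS' s hs t ht
  linarith [(hS s (hS'.trans hs)).1, (hS t (hS'.trans ht)).2]

theorem tendsto_apply_mul_of_antitone {U : ℝ → ℝ} {γ d : ℝ} (hγ : 0 < γ) (hd : 0 < d)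
    (hU : Tendsto (fun t => U t / t ^ γ) atTop (𝓝 d)) {p : ℝ → ℝ → ℝ}
    (hp : ∀ᶠ t in atTop, Antitone (p t)) {c : ℝ → ℝ} (hc : ContinuousOn c (Ioi 0))
    (hlim : ∀ x, 0 < x → Tendsto (fun t => p t (U (t / x))) atTop (𝓝 (c x)))
    {u : ℝ} (hu : 0 < u) :
    Tendsto (fun t => p t (U t * u)) atTop (𝓝 (c (u ^ (-(1 / γ))))) := by
  set x₀ := u ^ (-(1 / γ))
  have hx₀ : 0 < x₀ := rpow_pos_of_pos hu _
  have hx₀γ : x₀ ^ (-γ) = u := by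
    rw [← rpow_mul hu.le, neg_mul_neg, one_div_mul_cancel hγ.ne', rpow_one]
  have hcx₀ : ContinuousAt c x₀ := hc.continuousAt (Ioi_mem_nhds hx₀)
  have hUpos := eventually_pos_of_tendsto_div_rpow hd hU
  -- squeeze `U t * u` between `U (t / x)` for `x` slightly below and above `x₀ = u ^ (-1/γ)`
  rw [tendsto_order]
  constructor
  · intro a ha
    obtain ⟨x, ⟨hax, hx⟩, hxx₀⟩ := (((hcx₀.eventually (eventually_gt_nhds ha)).and
      (Ioi_mem_nhds hx₀)).filter_mono nhdsWithin_le_nhds |>.and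
        (self_mem_nhdsWithin : Iio x₀ ∈ 𝓝[<] x₀)).exists
    have hux : u < x ^ (-γ) := hx₀γ ▸ rpow_lt_rpow_of_neg hx hxx₀ (neg_neg_of_pos hγ)
    filter_upwards [(hlim x hx).eventually (eventually_gt_nhds hax),
      (tendsto_div_div_of_tendsto_div_rpow hd hU hx).eventually (eventually_gt_nhds hux),
      hUpos, hp]
      with t hpa hUx hUt hpt
    rw [lt_div_iff₀ hUt, mul_comm] at hUx
    exact hpa.trans_le (hpt hUx.le)
  · intro b hb
    obtain ⟨x, hbx, hxx₀⟩ := (((hcx₀.eventually (eventually_lt_nhds hb))).filter_mono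
      nhdsWithin_le_nhds |>.and (self_mem_nhdsWithin : Ioi x₀ ∈ 𝓝[>] x₀)).exists
    have hx : 0 < x := hx₀.trans hxx₀
    have hxu : x ^ (-γ) < u := hx₀γ ▸ rpow_lt_rpow_of_neg hx₀ hxx₀ (neg_neg_of_pos hγ)
    filter_upwards [(hlim x hx).eventually (eventually_lt_nhds hbx),
      (tendsto_div_div_of_tendsto_div_rpow hd hU hx).eventually (eventually_lt_nhds hxu),
      hUpos, hp]
      with t hpb hUx hUt hpt
    rw [div_lt_iff₀ hUt, mul_comm] at hUx
    exact (hpt hUx.le).trans_lt hpb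

theorem apply_mul_le_of_div_rpow_le_two_mul {U : ℝ → ℝ} {γ S t u : ℝ} (hγ : 0 < γ)
    (hS : 1 ≤ S) (hSt : S ≤ t) (hU : ∀ s ≥ S, U s / s ^ γ ≤ 2 * (U t / t ^ γ))
    {q B : ℝ → ℝ} (hq : Antitone q) (hB : ∀ x, 0 < x → x < t → q (U (t / x)) ≤ B x)
    (hu : 2 * (S / t) ^ γ < u) :
    q (U t * u) ≤ B ((u / 2) ^ (-(1 / γ))) := by
  have ht : 0 < t := by linarith
  have hSt' : 0 ≤ (S / t) ^ γ := by positivity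
  have hv : 0 < u / 2 := by linarith
  set k := (u / 2) ^ (1 / γ)
  have hk : 0 < k := rpow_pos_of_pos hv _
  have hkγ : k ^ γ = u / 2 := by
    rw [← rpow_mul hv.le, one_div_mul_cancel hγ.ne', rpow_one]
  have hdiv : t / (u / 2) ^ (-(1 / γ)) = t * k := by rw [rpow_neg hv.le, div_inv_eq_mul]
  have hSk : S / t < k := by
    rw [← rpow_lt_rpow_iff (by positivity) hk.le hγ, hkγ]
    linarith
  have htk : S < t * k := by rw [div_lt_iff₀ ht] at hSk; linarith
  -- the scale `k` is chosen so that `U (t * k) ≤ 2 k ^ γ U t = u U t`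
  have hUtk : U (t * k) ≤ U t * u := by
    have h := hU (t * k) htk.le
    rw [mul_rpow ht.le hk.le, hkγ, div_le_iff₀ (by positivity)] at h
    have htγ : 0 < t ^ γ := rpow_pos_of_pos ht γ
    calc U (t * k) ≤ 2 * (U t / t ^ γ) * (t ^ γ * (u / 2)) := h
      _ = U t * u := by field_simp
  have hx : 0 < (u / 2) ^ (-(1 / γ)) := rpow_pos_of_pos hv _
  have hxt : (u / 2) ^ (-(1 / γ)) < t := by
    rw [rpow_neg hv.le, inv_lt_iff_one_lt_mul₀ hk]
    linarith
  calc q (U t * u) ≤ q (U (t * k)) := hq hUtk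
    _ ≤ B ((u / 2) ^ (-(1 / γ))) := hdiv ▸ hB _ hx hxt

theorem exists_le_add_min_rpow {f : ℝ → ℝ → ℝ} {c : ℝ → ℝ} {β₁ β₂ : ℝ} (hβ : β₂ ≤ β₁)
    (h₁ : ∃ T, ∀ t ≥ T, ∀ x, 0 < x → x ≤ 1 → |f t x - c x| * x ^ (-β₁) ≤ 1)
    (h₂ : ∃ T, ∀ t ≥ T, ∀ x, 1 < x → x < t → |f t x - c x| * x ^ (-β₂) ≤ 1) :
    ∃ T, ∀ t ≥ T, ∀ x, 0 < x → x < t → f t x ≤ c x + min (x ^ β₁) (x ^ β₂) := by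
  obtain ⟨T₁, hT₁⟩ := h₁
  obtain ⟨T₂, hT₂⟩ := h₂
  have le_add_rpow :
      ∀ t x β : ℝ, 0 < x → |f t x - c x| * x ^ (-β) ≤ 1 → f t x ≤ c x + x ^ β := by
    intro t x β hx h
    rw [rpow_neg hx.le, ← div_eq_mul_inv, div_le_one (rpow_pos_of_pos hx β)] at h
    linarith [le_abs_self (f t x - c x)]
  refine ⟨max T₁ T₂, fun t ht x hx hxt => ?_⟩
  rcases le_or_gt x 1 with hx1 | hx1
  · rw [min_eq_left (rpow_le_rpow_of_exponent_ge hx hx1 hβ)]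
    exact le_add_rpow t x β₁ hx (hT₁ t (le_of_max_le_left ht) x hx hx1)
  · rw [min_eq_right (rpow_le_rpow_of_exponent_le hx1.le hβ)]
    exact le_add_rpow t x β₂ hx (hT₂ t (le_of_max_le_right ht) x hx1 hxt)

theorem integrableOn_Ioi_min_rpow {a b : ℝ} (ha : a < -1) (hb : -1 < b) :
    IntegrableOn (fun v : ℝ => min (v ^ a) (v ^ b)) (Ioi 0) := by
  have hmeas : AEStronglyMeasurable (fun v : ℝ => min (v ^ a) (v ^ b)) volume :=
    (by fun_prop : Measurable fun v : ℝ => min (v ^ a) (v ^ b)).aestronglyMeasurable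
  have hnorm : ∀ v : ℝ, 0 < v → ‖min (v ^ a) (v ^ b)‖ = min (v ^ a) (v ^ b) := fun v hv =>
    Real.norm_of_nonneg (le_min (rpow_nonneg hv.le a) (rpow_nonneg hv.le b))
  have h₀ : IntegrableOn (fun v : ℝ => min (v ^ a) (v ^ b)) (Ioc 0 1) := by
    refine Integrable.mono' ((intervalIntegrable_iff_integrableOn_Ioc_of_le zero_le_one).1
      (intervalIntegral.intervalIntegrable_rpow' hb)) hmeas.restrict ?_
    refine (ae_restrict_iff' measurableSet_Ioc).2 (Eventually.of_forall fun v hv => ?_)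
    exact (hnorm v hv.1).trans_le (min_le_right _ _)
  have h₁ : IntegrableOn (fun v : ℝ => min (v ^ a) (v ^ b)) (Ioi 1) := by
    refine Integrable.mono' (integrableOn_Ioi_rpow_of_lt ha one_pos) hmeas.restrict ?_
    refine (ae_restrict_iff' measurableSet_Ioi).2 (Eventually.of_forall fun v hv => ?_)
    exact (hnorm v (zero_lt_one.trans hv)).trans_le (min_le_left _ _)
  simpa only [Ioc_union_Ioi_eq_Ioi zero_le_one] using h₀.union h₁

theorem integrableOn_Ioi_add_min_rpow_comp_half {c : ℝ → ℝ} {γ β₁ β₂ : ℝ} (hγ : 0 < γ)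
    (hβ₁ : γ < β₁) (hβ₂ : β₂ < γ) (hc : IntegrableOn (fun v => c (v ^ (-(1 / γ)))) (Ioi 0)) :
    IntegrableOn (fun u => c ((u / 2) ^ (-(1 / γ)))
      + min (((u / 2) ^ (-(1 / γ))) ^ β₁) (((u / 2) ^ (-(1 / γ))) ^ β₂)) (Ioi 0) := by
  have hmin := integrableOn_Ioi_min_rpow (a := -(β₁ / γ)) (b := -(β₂ / γ))
    (by rw [neg_lt_neg_iff]; exact (one_lt_div hγ).2 hβ₁)
    (by rw [neg_lt_neg_iff]; exact (div_lt_one hγ).2 hβ₂)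
  have hsum : IntegrableOn (fun v => c (v ^ (-(1 / γ)))
      + min ((v ^ (-(1 / γ))) ^ β₁) ((v ^ (-(1 / γ))) ^ β₂)) (Ioi 0) := by
    refine hc.add (hmin.congr_fun (fun v hv => ?_) measurableSet_Ioi)
    simp only [← rpow_mul (le_of_lt hv), neg_mul, one_div_mul_eq_div]
  have := (integrableOn_Ioi_comp_mul_right_iff _ 0 (inv_pos.2 (zero_lt_two' ℝ))).2
    (by rwa [zero_mul])
  simpa only [div_eq_mul_inv] using this

theorem tendsto_integral_Ioi_of_dominated_beyond_cutoff {ι : Type*} {l : Filter ι}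
    [l.IsCountablyGenerated] {f : ι → ℝ → ℝ} {F G : ℝ → ℝ} {a M : ι → ℝ}
    (hf_meas : ∀ᶠ i in l, AEStronglyMeasurable (f i) (volume.restrict (Ioi 0)))
    (hf_lim : ∀ u, 0 < u → Tendsto (fun i => f i u) l (𝓝 (F u)))
    (hG : IntegrableOn G (Ioi 0)) (ha : Tendsto a l (𝓝[>] 0))
    (hf_le_G : ∀ᶠ i in l, ∀ u, a i < u → ‖f i u‖ ≤ G u)
    (hf_le_M : ∀ᶠ i in l, ∀ u ∈ Ioc 0 (a i), ‖f i u‖ ≤ M i)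
    (hMa : Tendsto (fun i => M i * a i) l (𝓝 0)) :
    Tendsto (fun i => ∫ u in Ioi 0, f i u) l (𝓝 (∫ u in Ioi 0, F u)) := by
  have ha_pos : ∀ᶠ i in l, 0 < a i := (tendsto_nhdsWithin_iff.1 ha).2
  have hnear : Tendsto (fun i => ∫ u in Ioc 0 (a i), f i u) l (𝓝 0) := by
    refine squeeze_zero_norm' ?_ hMa
    filter_upwards [hf_le_M, ha_pos] with i hM hai
    refine (norm_setIntegral_le_of_norm_le_const measure_Ioc_lt_top hM).trans_eq ?_
    rw [Real.volume_real_Ioc_of_le hai.le, sub_zero]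
  have hfar : Tendsto (fun i => ∫ u in Ioi 0, (Ioi (a i)).indicator (f i) u) l
      (𝓝 (∫ u in Ioi 0, F u)) := by
    refine tendsto_integral_filter_of_dominated_convergence (fun u => ‖G u‖) ?_ ?_ hG.norm ?_
    · filter_upwards [hf_meas] with i hi
      exact hi.indicator measurableSet_Ioi
    · filter_upwards [hf_le_G] with i hi
      refine Eventually.of_forall fun u => ?_
      by_cases hu : u ∈ Ioi (a i)
      · rw [indicator_of_mem hu]
        exact (hi u hu).trans (le_norm_self _)
      · rw [indicator_of_notMem hu, norm_zero]
        exact norm_nonneg _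
    · refine (ae_restrict_iff' measurableSet_Ioi).2 (Eventually.of_forall fun u hu => ?_)
      refine (hf_lim u hu).congr' ?_
      filter_upwards [(tendsto_nhdsWithin_iff.1 ha).1.eventually (eventually_lt_nhds hu)]
        with i hi
      exact (indicator_of_mem hi _).symm
  rw [← zero_add (∫ u in Ioi 0, F u)]
  refine (hnear.add hfar).congr' ?_
  filter_upwards [hf_meas, hf_le_G, hf_le_M, ha_pos] with i hmeas hG_i hM_i hai
  have hnear_int : IntegrableOn (f i) (Ioc 0 (a i)) :=
    Integrable.mono' (integrableOn_const measure_Ioc_lt_top.ne)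
      (hmeas.mono_measure (Measure.restrict_mono Ioc_subset_Ioi_self le_rfl))
      ((ae_restrict_iff' measurableSet_Ioc).2 (Eventually.of_forall hM_i))
  have hfar_int : IntegrableOn (f i) (Ioi (a i)) :=
    Integrable.mono' (hG.mono_set (Ioi_subset_Ioi hai.le)).norm
      (hmeas.mono_measure (Measure.restrict_mono (Ioi_subset_Ioi hai.le) le_rfl))
      ((ae_restrict_iff' measurableSet_Ioi).2
        (Eventually.of_forall fun u hu => (hG_i u hu).trans (le_norm_self _)))
  rw [integral_indicator measurableSet_Ioi,
    Measure.restrict_restrict measurableSet_Ioi, inter_eq_left.2 (Ioi_subset_Ioi hai.le),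
    ← setIntegral_union (Ioc_disjoint_Ioi le_rfl) measurableSet_Ioi hnear_int hfar_int,
    Ioc_union_Ioi_eq_Ioi hai.le]

theorem tendsto_mul_div_rpow_nhdsGT_zero {C S γ : ℝ} (hC : 0 < C) (hS : 0 < S) (hγ : 0 < γ) :
    Tendsto (fun t => C * (S / t) ^ γ) atTop (𝓝[>] 0) := by
  have h : Tendsto (fun t : ℝ => C * (S / t) ^ γ) atTop (𝓝 (C * 0 ^ γ)) :=
    ((tendsto_const_nhds.div_atTop tendsto_id).rpow_const (Or.inr hγ.le)).const_mul C
  rw [zero_rpow hγ.ne', mul_zero] at h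
  refine tendsto_nhdsWithin_iff.2 ⟨h, ?_⟩
  filter_upwards [eventually_gt_atTop 0] with t ht
  exact mem_Ioi.2 (by positivity)

theorem tendsto_rpow_mul_mul_div_rpow_atTop {r γ C S : ℝ} (hr : r < γ) (hS : 0 ≤ S) :
    Tendsto (fun t => t ^ r * (C * (S / t) ^ γ)) atTop (𝓝 0) := by
  have h := (tendsto_rpow_neg_atTop (sub_pos.2 hr)).const_mul (C * S ^ γ)
  rw [mul_zero] at h
  refine h.congr' ?_
  filter_upwards [eventually_gt_atTop 0] with t ht
  rw [neg_sub, rpow_sub ht, div_rpow hS ht.le]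
  ring

theorem tendsto_integral_Ioi_apply_mul {U : ℝ → ℝ} {γ d β₁ β₂ r : ℝ} (hγ : 0 < γ) (hd : 0 < d)
    (hU : Tendsto (fun t => U t / t ^ γ) atTop (𝓝 d)) (hβ₁ : γ < β₁) (hβ₂ : β₂ < γ) (hr : r < γ)
    {p : ℝ → ℝ → ℝ} (hp_anti : ∀ᶠ t in atTop, Antitone (p t))
    (hp_nonneg : ∀ᶠ t in atTop, ∀ s, 0 ≤ p t s) (hp_le : ∀ᶠ t in atTop, ∀ s, p t s ≤ t ^ r)
    {c : ℝ → ℝ} (hc : ContinuousOn c (Ioi 0))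
    (hlim : ∀ x, 0 < x → Tendsto (fun t => p t (U (t / x))) atTop (𝓝 (c x)))
    (h₁ : ∃ T, ∀ t ≥ T, ∀ x, 0 < x → x ≤ 1 → |p t (U (t / x)) - c x| * x ^ (-β₁) ≤ 1)
    (h₂ : ∃ T, ∀ t ≥ T, ∀ x, 1 < x → x < t → |p t (U (t / x)) - c x| * x ^ (-β₂) ≤ 1)
    (hc_int : IntegrableOn (fun v => c (v ^ (-(1 / γ)))) (Ioi 0)) :
    Tendsto (fun t => ∫ u in Ioi 0, p t (U t * u)) atTop
      (𝓝 (∫ u in Ioi 0, c (u ^ (-(1 / γ))))) := by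
  obtain ⟨S, hS_potter, hS1⟩ :=
    ((eventually_le_two_mul_of_tendsto hd hU).and (eventually_ge_atTop 1)).exists
  have hS0 : 0 < S := zero_lt_one.trans_le hS1
  obtain ⟨T, hT⟩ := exists_le_add_min_rpow (hβ₂.trans hβ₁).le h₁ h₂
  have hUpos := eventually_pos_of_tendsto_div_rpow hd hU
  refine tendsto_integral_Ioi_of_dominated_beyond_cutoff (M := fun t => t ^ r) ?_
    (fun u hu => tendsto_apply_mul_of_antitone hγ hd hU hp_anti hc hlim hu)
    (integrableOn_Ioi_add_min_rpow_comp_half hγ hβ₁ hβ₂ hc_int)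
    (tendsto_mul_div_rpow_nhdsGT_zero two_pos hS0 hγ) ?_ ?_
    (tendsto_rpow_mul_mul_div_rpow_atTop hr hS0.le)
  · filter_upwards [hp_anti, hUpos] with t hpt hUt
    exact (hpt.comp_monotone fun u v huv =>
      mul_le_mul_of_nonneg_left huv hUt.le).measurable.aestronglyMeasurable
  · filter_upwards [eventually_ge_atTop (max S T), hp_anti, hp_nonneg] with t ht hpt hp0 u hu
    have htS : S ≤ t := le_of_max_le_left ht
    rw [Real.norm_of_nonneg (hp0 _)]
    exact apply_mul_le_of_div_rpow_le_two_mul hγ hS1 htS (fun s hs => hS_potter s hs t htS) hpt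
      (hT t (le_of_max_le_right ht)) hu
  · filter_upwards [hp_nonneg, hp_le] with t hp0 hpr u _
    rw [Real.norm_of_nonneg (hp0 _)]
    exact hpr _

theorem stmt_10_general {Ω : Type*} [MeasurableSpace Ω] (μ : Measure Ω) [IsProbabilityMeasure μ]
    (X Y : Ω → ℝ) (hYm : Measurable Y)
    (hXpos : ∀ᵐ ω ∂μ, 0 < X ω) (hXint : Integrable X μ)
    (η γ₁ d β₁ β₂ : ℝ) (hγ₁ : 0 < γ₁) (hd : 0 < d)
    (hβ₁ : β₁ > γ₁) (hβ₂ : 0 < β₂ ∧ β₂ < γ₁)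
    (hexp : -(1 / η) + 1 + γ₁ > 0)
    (U₁ U₂ : ℝ → ℝ)
    (hA1 : Tendsto (fun t => U₁ t / t ^ γ₁) atTop (nhds d))
    (hU₂ : ∀ t : ℝ, 1 < t → (μ {ω | Y ω > U₂ t}).toReal = 1 / t)
    (ct : ℝ → ℝ → ℝ → ℝ)
    (hct : ∀ t x y : ℝ, ct t x y
      = t ^ (1 / η) * (μ {ω | X ω > U₁ (t / x) ∧ Y ω > U₂ (t / y)}).toReal)
    (c : ℝ → ℝ → ℝ)
    (hccont : ContinuousOn (fun x => c x 1) (Set.Ioi (0 : ℝ)))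
    (hclim : ∀ x y : ℝ, 0 < x → 0 < y → Tendsto (fun t => ct t x y) atTop (nhds (c x y)))
    (hA2 : ∀ ε : ℝ, 0 < ε → ∃ T : ℝ, ∀ t ≥ T, ∀ x : ℝ, 0 < x → x ≤ 1 →
      |ct t x 1 - c x 1| * x ^ (-β₁) ≤ ε)
    (hA3 : ∀ ε : ℝ, 0 < ε → ∃ T : ℝ, ∀ t ≥ T, ∀ x : ℝ, 1 < x → x < t →
      |ct t x 1 - c x 1| * x ^ (-β₂) ≤ ε)
    (hcint : IntegrableOn (fun x => c (x ^ (-(1 / γ₁))) 1) (Set.Ioi (0 : ℝ))) :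
    Tendsto (fun t =>
        ((∫ ω in {ω | Y ω > U₂ t}, X ω ∂μ) / (μ {ω | Y ω > U₂ t}).toReal)
          / (t ^ (-(1 / η) + 1) * U₁ t))
      atTop (nhds (∫ x in Set.Ioi (0 : ℝ), c (x ^ (-(1 / γ₁))) 1)) := by
  obtain ⟨-, hβ₂γ⟩ := hβ₂
  set A : ℝ → Set Ω := fun t => {ω | Y ω > U₂ t}
  set p : ℝ → ℝ → ℝ := fun t s => t ^ (1 / η) * μ.real ({ω | s < X ω} ∩ A t)
  have hp_ct : ∀ t x, ct t x 1 = p t (U₁ (t / x)) := fun t x => by rw [hct, div_one]; rfl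
  have hp_anti : ∀ᶠ t in atTop, Antitone (p t) := by
    filter_upwards [eventually_ge_atTop 0] with t ht
    exact Antitone.const_mul (fun s₁ s₂ hs => measureReal_mono
      (inter_subset_inter_left _ fun ω hω => hs.trans_lt hω)) (rpow_nonneg ht _)
  have hp_nonneg : ∀ᶠ t in atTop, ∀ s, 0 ≤ p t s := by
    filter_upwards [eventually_ge_atTop 0] with t ht s
    positivity
  have hp_le : ∀ᶠ t in atTop, ∀ s, p t s ≤ t ^ (1 / η - 1) := by
    filter_upwards [eventually_gt_atTop 1] with t ht s
    rw [rpow_sub_one (by positivity), div_eq_mul_one_div, ← hU₂ t ht, ← measureReal_def]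
    exact mul_le_mul_of_nonneg_left (measureReal_mono inter_subset_right) (by positivity)
  have hid : ∀ᶠ t in atTop, ∫ u in Ioi 0, p t (U₁ t * u)
      = ((∫ ω in A t, X ω ∂μ) / (μ (A t)).toReal) / (t ^ (-(1 / η) + 1) * U₁ t) := by
    filter_upwards [eventually_gt_atTop 1, eventually_pos_of_tendsto_div_rpow hd hA1]
      with t ht hUt
    have ht0 : 0 < t := one_pos.trans ht
    rw [hU₂ t ht, setIntegral_eq_mul_integral_measureReal_gt hXint (hXpos.mono fun _ h => h.le)
      (measurableSet_lt measurable_const hYm) hUt, integral_const_mul, rpow_add ht0,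
      rpow_neg ht0.le, rpow_one]
    field_simp
    rfl
  refine (tendsto_integral_Ioi_apply_mul (c := fun x => c x 1) hγ₁ hd hA1 hβ₁ hβ₂γ
    (by linarith) hp_anti hp_nonneg hp_le hccont
    (fun x hx => by simpa only [hp_ct] using hclim x 1 hx one_pos)
    (by simpa only [hp_ct] using hA2 1 one_pos) (by simpa only [hp_ct] using hA3 1 one_pos)
    hcint).congr' hid

/-- Proposition 1: limit of the marginal expected shortfall
`θ_{1/t} = E[X | Y > U₂(t)]` under asymptotic independence:
`θ_{1/t} / (t^{-1/η+1} U₁(t)) → ∫₀^∞ c(x^{-1/γ₁}, 1) dx`. -/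
theorem stmt_10 {Ω : Type*} [MeasurableSpace Ω] (μ : Measure Ω) [IsProbabilityMeasure μ]
    (X Y : Ω → ℝ) (hXm : Measurable X) (hYm : Measurable Y)
    (hXpos : ∀ᵐ ω ∂μ, 0 < X ω) (hXint : Integrable X μ)
    (η γ₁ d β₁ β₂ : ℝ) (hη : 1 / 2 < η ∧ η ≤ 1) (hγ₁ : 0 < γ₁) (hd : 0 < d)
    (hβ₁ : β₁ > γ₁) (hβ₂ : 0 < β₂ ∧ β₂ < γ₁)
    (hexp : -(1 / η) + 1 + γ₁ > 0)
    (U₁ U₂ : ℝ → ℝ) (hU₁pos : ∀ t : ℝ, 0 < t → 0 < U₁ t)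
    (hA1 : Tendsto (fun t => U₁ t / t ^ γ₁) atTop (nhds d))
    (hU₂ : ∀ t : ℝ, 1 < t → (μ {ω | Y ω > U₂ t}).toReal = 1 / t)
    (ct : ℝ → ℝ → ℝ → ℝ)
    (hct : ∀ t x y : ℝ, ct t x y
      = t ^ (1 / η) * (μ {ω | X ω > U₁ (t / x) ∧ Y ω > U₂ (t / y)}).toReal)
    (c : ℝ → ℝ → ℝ)
    (hccont : ContinuousOn (fun x => c x 1) (Set.Ioi (0 : ℝ)))
    (hclim : ∀ x y : ℝ, 0 < x → 0 < y → Tendsto (fun t => ct t x y) atTop (nhds (c x y)))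
    (hA2 : ∀ ε : ℝ, 0 < ε → ∃ T : ℝ, ∀ t ≥ T, ∀ x : ℝ, 0 < x → x ≤ 1 →
      |ct t x 1 - c x 1| * x ^ (-β₁) ≤ ε)
    (hA3 : ∀ ε : ℝ, 0 < ε → ∃ T : ℝ, ∀ t ≥ T, ∀ x : ℝ, 1 < x → x < t →
      |ct t x 1 - c x 1| * x ^ (-β₂) ≤ ε)
    (hcint : IntegrableOn (fun x => c (x ^ (-(1 / γ₁))) 1) (Set.Ioi (0 : ℝ))) :
    Tendsto (fun t =>
        ((∫ ω in {ω | Y ω > U₂ t}, X ω ∂μ) / (μ {ω | Y ω > U₂ t}).toReal)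
          / (t ^ (-(1 / η) + 1) * U₁ t))
      atTop (nhds (∫ x in Set.Ioi (0 : ℝ), c (x ^ (-(1 / γ₁))) 1)) :=
  stmt_10_general μ X Y hYm hXpos hXint η γ₁ d β₁ β₂ hγ₁ hd hβ₁ hβ₂ hexp U₁ U₂ hA1 hU₂ ct hct c
    hccont hclim hA2 hA3 hcint
end

section
/- Let B be a Bernoulli(1/2) random variable and Z₁, Z₂, Z₃ independent Pareto random variables with tail indices 0.3, 0.4, 0.4 (i.e., P(Z_i > z) = z^{−1/γ_i} for z ≥ 1 with γ₁ = 0.3, γ₂ = γ₃ = 0.4), B independent of (Z₁,Z₂,Z₃). For the pair X = Z₁ ∨ Z₂, Y = Z₁ ∨ Z₃: the extreme value index of X equals 0.4, and lim_{t→∞} t^{4/3} P(X > U₁(t/x), Y > U₂(t/y)) exists, is positive and finite, and equals d·(x ∧ y)^{4/3} for some constant d > 0; hence the coefficient of tail dependence of (X,Y) is η = 3/4. -/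
/-!
Write `α = 10/3`, `β = 5/2`. The distribution function of `X = Z₁ ∨ Z₂` is
`(1 - u^{-α})(1 - u^{-β})`, whose tail is `u^{-β}(1 + o(1))`; so the tail quantile function
satisfies `U₁(t) ~ t^{1/β}`, which gives the extreme value index `1/β = 0.4`, and likewise for `Y`.

For the joint tail, `{X > a, Y > b}` contains `{Z₁ > a ∨ b}` and is covered by it together with
the three events `{Z_i > a, Z_j > b}` with `i ≠ j`, whose probabilities factor by independence.
At `a = U₁(t/x)`, `b = U₂(t/y)` the common part has probability `t^{-α/β}((x ∧ y)^{α/β} + o(1))`,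
while the products are `O(t^{-2})` or `O(t^{-1-α/β})`, negligible since `α/β = 4/3 < 2`.
Hence `d = 1` and `η = β/α = 3/4`.
-/

open Real Filter MeasureTheory ProbabilityTheory Set Topology

noncomputable def tailQuantile (F : ℝ → ℝ) (t : ℝ) : ℝ := sInf {u | 1 - F u ≤ 1 / t}

noncomputable def paretoMaxCDF (α β u : ℝ) : ℝ :=
  if u < 1 then 0 else (1 - u ^ (-α)) * (1 - u ^ (-β))

section Quantile

variable {α β t : ℝ}

lemma rpow_inv_le_of_one_sub_paretoMaxCDF_le (hβ : 0 < β) (ht : 1 < t) {u : ℝ}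
    (hu : 1 - paretoMaxCDF α β u ≤ 1 / t) : t ^ β⁻¹ ≤ u := by
  have ht0 : 0 < t := by linarith
  unfold paretoMaxCDF at hu
  split_ifs at hu with hu1
  · linarith [(div_lt_one ht0).2 ht]
  rw [not_lt] at hu1
  have hu0 : 0 < u := by linarith
  have hq : u ^ (-β) ≤ 1 := rpow_le_one_of_one_le_of_nonpos hu1 (by linarith)
  have hp : 0 ≤ u ^ (-α) := rpow_nonneg hu0.le _
  have hqt : u ^ (-β) ≤ 1 / t := by nlinarith
  rw [rpow_neg hu0.le, one_div, inv_le_inv₀ (by positivity) ht0] at hqt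
  exact (rpow_inv_le_iff_of_pos ht0.le hu0.le hβ).2 hqt

/- At `u^β = w := t (1 + t^{1-α/β})` we have `u^{-α} = w⁻¹ w^{1-α/β} ≤ w⁻¹ t^{1-α/β}`: the
correction in `w` absorbs the Pareto(α) part of the tail. -/
lemma one_sub_paretoMaxCDF_le (hβ : 0 < β) (hαβ : β < α) (ht : 1 < t) :
    1 - paretoMaxCDF α β ((t * (1 + t ^ (1 - α / β))) ^ β⁻¹) ≤ 1 / t := by
  have ht0 : 0 < t := by linarith
  set ε := t ^ (1 - α / β)
  set w := t * (1 + ε)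
  have hε : 0 < ε := by positivity
  have htw : t ≤ w := le_mul_of_one_le_right ht0.le (by linarith)
  have hw0 : 0 < w := by positivity
  have hv1 : 1 ≤ w ^ β⁻¹ := one_le_rpow (by linarith) (by positivity)
  have hq : (w ^ β⁻¹) ^ (-β) = w⁻¹ := by
    rw [← rpow_mul hw0.le, inv_mul_eq_div, neg_div, div_self hβ.ne', rpow_neg_one]
  have hp : (w ^ β⁻¹) ^ (-α) ≤ w⁻¹ * ε := by
    have hδ : 1 - α / β ≤ 0 := by rw [sub_nonpos, one_le_div hβ]; exact hαβ.le
    calc (w ^ β⁻¹) ^ (-α) = w⁻¹ * w ^ (1 - α / β) := by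
          rw [← rpow_neg_one w, ← rpow_add hw0, ← rpow_mul hw0.le]; congr 1; field_simp; ring
      _ ≤ w⁻¹ * ε := by gcongr; exact rpow_le_rpow_of_nonpos ht0 htw hδ
  have hp0 : 0 ≤ (w ^ β⁻¹) ^ (-α) := by positivity
  have hq0 : 0 ≤ w⁻¹ := by positivity
  rw [paretoMaxCDF, if_neg hv1.not_gt, hq]
  calc 1 - (1 - (w ^ β⁻¹) ^ (-α)) * (1 - w⁻¹) ≤ w⁻¹ * ε + w⁻¹ := by nlinarith
    _ = 1 / t := by simp only [w]; field_simp; ring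

lemma tailQuantile_paretoMaxCDF_mem_Icc (hβ : 0 < β) (hαβ : β < α) (ht : 1 < t) :
    tailQuantile (paretoMaxCDF α β) t ∈ Icc (t ^ β⁻¹) ((t * (1 + t ^ (1 - α / β))) ^ β⁻¹) :=
  ⟨le_csInf ⟨_, one_sub_paretoMaxCDF_le hβ hαβ ht⟩
      fun _ hu => rpow_inv_le_of_one_sub_paretoMaxCDF_le hβ ht hu,
    csInf_le ⟨_, fun _ hu => rpow_inv_le_of_one_sub_paretoMaxCDF_le hβ ht hu⟩
      (one_sub_paretoMaxCDF_le hβ hαβ ht)⟩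

lemma tendsto_tailQuantile_paretoMaxCDF_div_rpow (hβ : 0 < β) (hαβ : β < α) :
    Tendsto (fun t => tailQuantile (paretoMaxCDF α β) t / t ^ β⁻¹) atTop (𝓝 1) := by
  have hδ : 0 < α / β - 1 := by rw [sub_pos, one_lt_div hβ]; exact hαβ
  have hupper : Tendsto (fun t : ℝ => (1 + t ^ (1 - α / β)) ^ β⁻¹) atTop (𝓝 1) := by
    have h := ((tendsto_rpow_neg_atTop hδ).const_add 1).rpow_const (p := β⁻¹) (.inl (by norm_num))
    simpa using h
  refine tendsto_of_tendsto_of_tendsto_of_le_of_le' tendsto_const_nhds hupper ?_ ?_ <;>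
    filter_upwards [eventually_gt_atTop 1] with t ht <;>
    have ht0 : 0 < t := by linarith
  · rw [one_le_div (by positivity)]
    exact (tailQuantile_paretoMaxCDF_mem_Icc hβ hαβ ht).1
  · rw [div_le_iff₀ (by positivity), ← mul_rpow (by positivity) ht0.le, mul_comm _ t]
    exact (tailQuantile_paretoMaxCDF_mem_Icc hβ hαβ ht).2

end Quantile

section RegularVariation

variable {U : ℝ → ℝ} {β : ℝ}

lemma tendsto_atTop_of_tendsto_div_rpow (hβ : 0 < β)
    (hU : Tendsto (fun t => U t / t ^ β⁻¹) atTop (𝓝 1)) : Tendsto U atTop atTop := by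
  refine (hU.pos_mul_atTop one_pos (tendsto_rpow_atTop (inv_pos.2 hβ))).congr' ?_
  filter_upwards [eventually_gt_atTop 0] with t ht
  exact div_mul_cancel₀ _ (by positivity)

lemma tendsto_div_of_tendsto_div_rpow (hU : Tendsto (fun t => U t / t ^ β⁻¹) atTop (𝓝 1))
    {x : ℝ} (hx : 0 < x) : Tendsto (fun t => U (t * x) / U t) atTop (𝓝 (x ^ β⁻¹)) := by
  have hUx := hU.comp (tendsto_id.atTop_mul_const hx)
  have h := (hUx.mul_const (x ^ β⁻¹)).div hU one_ne_zero
  rw [one_mul, div_one] at h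
  refine h.congr' ?_
  filter_upwards [eventually_gt_atTop 0, hU.eventually_ne one_ne_zero] with t ht hUt
  have : U t ≠ 0 := (div_ne_zero_iff.1 hUt).1
  simp only [Pi.div_apply, Function.comp_apply, id]
  rw [mul_rpow ht.le hx.le]
  field_simp

lemma tendsto_rpow_mul_rpow_neg_comp_div (hU : Tendsto (fun t => U t / t ^ β⁻¹) atTop (𝓝 1))
    {x : ℝ} (hx : 0 < x) (c : ℝ) :
    Tendsto (fun t => t ^ (c / β) * U (t / x) ^ (-c)) atTop (𝓝 (x ^ (c / β))) := by
  have hUx := hU.comp (tendsto_id.atTop_div_const hx)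
  have h := ((hUx.inv₀ one_ne_zero).rpow_const (p := c) (.inl (by norm_num))).const_mul (x ^ (c / β))
  rw [inv_one, one_rpow, mul_one] at h
  refine h.congr' ?_
  filter_upwards [eventually_gt_atTop 0, hUx.eventually (lt_mem_nhds one_pos)] with t ht hUt
  simp only [Function.comp_apply, id] at hUt ⊢
  have htx : 0 < t / x := by positivity
  have hU0 : 0 < U (t / x) := (div_pos_iff_of_pos_right (by positivity)).1 hUt
  rw [inv_div, div_rpow (by positivity) hU0.le, ← rpow_mul htx.le, div_rpow ht.le hx.le,
    rpow_neg hU0.le, inv_mul_eq_div]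
  field_simp

end RegularVariation

section Probability

variable {Ω : Type*} [MeasurableSpace Ω] {μ : Measure Ω} {Z Z' Z₁ Z₂ Z₃ : Ω → ℝ} {α β : ℝ}

lemma ProbabilityTheory.IndepFun.measureReal_lt_and_lt (h : IndepFun Z Z' μ) (a b : ℝ) :
    μ.real {ω | a < Z ω ∧ b < Z' ω} = μ.real {ω | a < Z ω} * μ.real {ω | b < Z' ω} := by
  rw [Measure.real, Measure.real, Measure.real, ← ENNReal.toReal_mul]
  exact congrArg ENNReal.toReal
    (h.measure_inter_preimage_eq_mul (Ioi a) (Ioi b) measurableSet_Ioi measurableSet_Ioi)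

lemma ProbabilityTheory.IndepFun.measureReal_max_le (h : IndepFun Z Z' μ) (u : ℝ) :
    μ.real {ω | max (Z ω) (Z' ω) ≤ u} = μ.real {ω | Z ω ≤ u} * μ.real {ω | Z' ω ≤ u} := by
  simp_rw [max_le_iff]
  rw [Measure.real, Measure.real, Measure.real, ← ENNReal.toReal_mul]
  exact congrArg ENNReal.toReal
    (h.measure_inter_preimage_eq_mul (Iic u) (Iic u) measurableSet_Iic measurableSet_Iic)

lemma measureReal_le_eq_one_sub [IsProbabilityMeasure μ] (hZ : Measurable Z) (u : ℝ) :
    μ.real {ω | Z ω ≤ u} = 1 - μ.real {ω | u < Z ω} := by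
  rw [← probReal_compl_eq_one_sub (s := {ω | u < Z ω}) (hZ measurableSet_Ioi)]
  simp only [compl_ofPred, not_lt]

lemma measureReal_max_le_eq_paretoMaxCDF [IsProbabilityMeasure μ] (h : IndepFun Z Z' μ)
    (hZm : Measurable Z) (hZ'm : Measurable Z')
    (hZ : ∀ z, 1 ≤ z → μ.real {ω | z < Z ω} = z ^ (-α)) (hZ1 : ∀ᵐ ω ∂μ, 1 ≤ Z ω)
    (hZ' : ∀ z, 1 ≤ z → μ.real {ω | z < Z' ω} = z ^ (-β)) (u : ℝ) :
    μ.real {ω | max (Z ω) (Z' ω) ≤ u} = paretoMaxCDF α β u := by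
  unfold paretoMaxCDF
  split_ifs with hu
  · rw [measureReal_eq_zero_iff, measure_eq_zero_iff_ae_notMem]
    filter_upwards [hZ1] with ω hω
    simp only [not_le]
    exact hu.trans_le (hω.trans (le_max_left _ _))
  · rw [not_lt] at hu
    rw [h.measureReal_max_le, measureReal_le_eq_one_sub hZm, measureReal_le_eq_one_sub hZ'm,
      hZ u hu, hZ' u hu]

lemma measureReal_lt_max_and_lt_max_le [IsFiniteMeasure μ] (h₁₂ : IndepFun Z₁ Z₂ μ)
    (h₁₃ : IndepFun Z₁ Z₃ μ) (h₂₃ : IndepFun Z₂ Z₃ μ) (a b : ℝ) :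
    μ.real {ω | a < max (Z₁ ω) (Z₂ ω) ∧ b < max (Z₁ ω) (Z₃ ω)} ≤
      μ.real {ω | max a b < Z₁ ω} + μ.real {ω | a < Z₂ ω} * μ.real {ω | b < Z₃ ω} +
        μ.real {ω | a < Z₁ ω} * μ.real {ω | b < Z₃ ω} +
        μ.real {ω | a < Z₂ ω} * μ.real {ω | b < Z₁ ω} := by
  have hsub : {ω | a < max (Z₁ ω) (Z₂ ω) ∧ b < max (Z₁ ω) (Z₃ ω)} ⊆
      {ω | max a b < Z₁ ω} ∪ {ω | a < Z₂ ω ∧ b < Z₃ ω} ∪ {ω | a < Z₁ ω ∧ b < Z₃ ω} ∪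
        {ω | a < Z₂ ω ∧ b < Z₁ ω} := by
    intro ω hω
    simp only [mem_ofPred_eq, lt_max_iff, mem_union] at hω ⊢
    rcases hω with ⟨ha | ha, hb | hb⟩
    · exact .inl (.inl (.inl (max_lt ha hb)))
    · exact .inl (.inr ⟨ha, hb⟩)
    · exact .inr ⟨ha, hb⟩
    · exact .inl (.inl (.inr ⟨ha, hb⟩))
  calc _ ≤ _ := measureReal_mono hsub
    _ ≤ μ.real {ω | max a b < Z₁ ω} + μ.real {ω | a < Z₂ ω ∧ b < Z₃ ω} +
          μ.real {ω | a < Z₁ ω ∧ b < Z₃ ω} + μ.real {ω | a < Z₂ ω ∧ b < Z₁ ω} :=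
      (measureReal_union_le _ _).trans <| add_le_add ((measureReal_union_le _ _).trans <|
        add_le_add (measureReal_union_le _ _) le_rfl) le_rfl
    _ = _ := by rw [h₂₃.measureReal_lt_and_lt, h₁₃.measureReal_lt_and_lt,
        h₁₂.symm.measureReal_lt_and_lt]

lemma measureReal_max_lt_le_measureReal_lt_max_and [IsFiniteMeasure μ] (a b : ℝ) :
    μ.real {ω | max a b < Z₁ ω} ≤
      μ.real {ω | a < max (Z₁ ω) (Z₂ ω) ∧ b < max (Z₁ ω) (Z₃ ω)} :=
  measureReal_mono fun ω hω =>
    ⟨lt_max_of_lt_left ((le_max_left a b).trans_lt hω),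
      lt_max_of_lt_left ((le_max_right a b).trans_lt hω)⟩

lemma measureReal_lt_max_and_lt_max_mem_Icc [IsFiniteMeasure μ] (h₁₂ : IndepFun Z₁ Z₂ μ)
    (h₁₃ : IndepFun Z₁ Z₃ μ) (h₂₃ : IndepFun Z₂ Z₃ μ) (hα : 0 ≤ α)
    (hZ₁ : ∀ z, 1 ≤ z → μ.real {ω | z < Z₁ ω} = z ^ (-α))
    (hZ₂ : ∀ z, 1 ≤ z → μ.real {ω | z < Z₂ ω} = z ^ (-β))
    (hZ₃ : ∀ z, 1 ≤ z → μ.real {ω | z < Z₃ ω} = z ^ (-β)) {a b : ℝ} (ha : 1 ≤ a) (hb : 1 ≤ b) :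
    μ.real {ω | a < max (Z₁ ω) (Z₂ ω) ∧ b < max (Z₁ ω) (Z₃ ω)} ∈
      Icc (min (a ^ (-α)) (b ^ (-α))) (min (a ^ (-α)) (b ^ (-α)) + a ^ (-β) * b ^ (-β) +
        a ^ (-α) * b ^ (-β) + a ^ (-β) * b ^ (-α)) := by
  have hmax : μ.real {ω | max a b < Z₁ ω} = min (a ^ (-α)) (b ^ (-α)) := by
    rw [hZ₁ _ (ha.trans (le_max_left a b))]
    rcases le_total a b with hab | hab
    · rw [max_eq_right hab, min_eq_right (rpow_le_rpow_of_nonpos (by linarith) hab (by linarith))]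
    · rw [max_eq_left hab, min_eq_left (rpow_le_rpow_of_nonpos (by linarith) hab (by linarith))]
  constructor
  · exact hmax ▸ measureReal_max_lt_le_measureReal_lt_max_and a b
  · have h := measureReal_lt_max_and_lt_max_le h₁₂ h₁₃ h₂₃ a b
    rwa [hmax, hZ₁ a ha, hZ₁ b hb, hZ₂ a ha, hZ₃ b hb] at h

end Probability

section Limits

variable {U₁ U₂ : ℝ → ℝ} {α β x y : ℝ}

lemma tendsto_rpow_mul_min_rpow_neg (hβ : 0 < β) (hα : 0 ≤ α)
    (hU₁ : Tendsto (fun t => U₁ t / t ^ β⁻¹) atTop (𝓝 1))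
    (hU₂ : Tendsto (fun t => U₂ t / t ^ β⁻¹) atTop (𝓝 1)) (hx : 0 < x) (hy : 0 < y) :
    Tendsto (fun t => t ^ (α / β) * min (U₁ (t / x) ^ (-α)) (U₂ (t / y) ^ (-α))) atTop
      (𝓝 (min x y ^ (α / β))) := by
  have hmin : min x y ^ (α / β) = min (x ^ (α / β)) (y ^ (α / β)) :=
    ((monotoneOn_rpow_Ici_of_exponent_nonneg (by positivity)).mono
      (Ioi_subset_Ici_self (a := 0))).map_min hx hy
  rw [hmin]
  refine ((tendsto_rpow_mul_rpow_neg_comp_div hU₁ hx α).min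
    (tendsto_rpow_mul_rpow_neg_comp_div hU₂ hy α)).congr' ?_
  filter_upwards [eventually_gt_atTop 0] with t ht
  exact (mul_min_of_nonneg _ _ (by positivity)).symm

lemma tendsto_rpow_mul_cross_terms (hβ : 0 < β) (hαβ : α < 2 * β)
    (hU₁ : Tendsto (fun t => U₁ t / t ^ β⁻¹) atTop (𝓝 1))
    (hU₂ : Tendsto (fun t => U₂ t / t ^ β⁻¹) atTop (𝓝 1)) (hx : 0 < x) (hy : 0 < y) :
    Tendsto (fun t => t ^ (α / β) * (U₁ (t / x) ^ (-β) * U₂ (t / y) ^ (-β) +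
      U₁ (t / x) ^ (-α) * U₂ (t / y) ^ (-β) + U₁ (t / x) ^ (-β) * U₂ (t / y) ^ (-α)))
      atTop (𝓝 0) := by
  have hA := tendsto_rpow_mul_rpow_neg_comp_div hU₁ hx α
  have hR := tendsto_rpow_mul_rpow_neg_comp_div hU₂ hy α
  have hQ := tendsto_rpow_mul_rpow_neg_comp_div hU₁ hx β
  have hS := tendsto_rpow_mul_rpow_neg_comp_div hU₂ hy β
  simp only [div_self hβ.ne', rpow_one] at hQ hS
  have hT : Tendsto (fun t : ℝ => t ^ (α / β - 2)) atTop (𝓝 0) := by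
    convert tendsto_rpow_neg_atTop (y := 2 - α / β) (by rw [sub_pos, div_lt_iff₀ hβ]; linarith)
      using 3
    ring
  have h := ((hT.mul hQ).mul hS).add (tendsto_inv_atTop_zero.mul ((hA.mul hS).add (hQ.mul hR)))
  rw [zero_mul, zero_mul, zero_mul, add_zero] at h
  refine h.congr' ?_
  filter_upwards [eventually_gt_atTop 0] with t ht
  rw [rpow_sub ht, rpow_two]
  field_simp
  ring

end Limits

section TailDependence

variable {Ω : Type*} [MeasurableSpace Ω] {μ : Measure Ω} {Z Z' Z₁ Z₂ Z₃ : Ω → ℝ}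
  {U U₁ U₂ : ℝ → ℝ} {α β : ℝ}

lemma tendsto_div_rpow_of_eq_tailQuantile_max [IsProbabilityMeasure μ] (hβ : 0 < β)
    (hαβ : β < α) (h : IndepFun Z Z' μ) (hZm : Measurable Z) (hZ'm : Measurable Z')
    (hZ : ∀ z, 1 ≤ z → μ.real {ω | z < Z ω} = z ^ (-α)) (hZ1 : ∀ᵐ ω ∂μ, 1 ≤ Z ω)
    (hZ' : ∀ z, 1 ≤ z → μ.real {ω | z < Z' ω} = z ^ (-β))
    (hU : ∀ t, 1 < t → U t = tailQuantile (fun u => μ.real {ω | max (Z ω) (Z' ω) ≤ u}) t) :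
    Tendsto (fun t => U t / t ^ β⁻¹) atTop (𝓝 1) := by
  have hF : (fun u => μ.real {ω | max (Z ω) (Z' ω) ≤ u}) = paretoMaxCDF α β :=
    funext (measureReal_max_le_eq_paretoMaxCDF h hZm hZ'm hZ hZ1 hZ')
  refine (tendsto_tailQuantile_paretoMaxCDF_div_rpow hβ hαβ).congr' ?_
  filter_upwards [eventually_gt_atTop 1] with t ht
  rw [hU t ht, hF]

theorem tendsto_rpow_mul_measureReal_lt_max_and_lt_max [IsFiniteMeasure μ] (hβ : 0 < β)
    (hα : 0 ≤ α) (hαβ : α < 2 * β)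
    (h₁₂ : IndepFun Z₁ Z₂ μ) (h₁₃ : IndepFun Z₁ Z₃ μ) (h₂₃ : IndepFun Z₂ Z₃ μ)
    (hZ₁ : ∀ z, 1 ≤ z → μ.real {ω | z < Z₁ ω} = z ^ (-α))
    (hZ₂ : ∀ z, 1 ≤ z → μ.real {ω | z < Z₂ ω} = z ^ (-β))
    (hZ₃ : ∀ z, 1 ≤ z → μ.real {ω | z < Z₃ ω} = z ^ (-β))
    (hU₁ : Tendsto (fun t => U₁ t / t ^ β⁻¹) atTop (𝓝 1))
    (hU₂ : Tendsto (fun t => U₂ t / t ^ β⁻¹) atTop (𝓝 1)) {x y : ℝ} (hx : 0 < x) (hy : 0 < y) :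
    Tendsto (fun t => t ^ (α / β) *
        μ.real {ω | U₁ (t / x) < max (Z₁ ω) (Z₂ ω) ∧ U₂ (t / y) < max (Z₁ ω) (Z₃ ω)})
      atTop (𝓝 (min x y ^ (α / β))) := by
  have hlow := tendsto_rpow_mul_min_rpow_neg hβ hα hU₁ hU₂ hx hy
  have hup := hlow.add (tendsto_rpow_mul_cross_terms hβ hαβ hU₁ hU₂ hx hy)
  rw [add_zero] at hup
  have ha := ((tendsto_atTop_of_tendsto_div_rpow hβ hU₁).comp
    (tendsto_id.atTop_div_const hx)).eventually_ge_atTop 1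
  have hb := ((tendsto_atTop_of_tendsto_div_rpow hβ hU₂).comp
    (tendsto_id.atTop_div_const hy)).eventually_ge_atTop 1
  refine tendsto_of_tendsto_of_tendsto_of_le_of_le' hlow hup ?_ ?_ <;>
    filter_upwards [eventually_gt_atTop 0, ha, hb] with t ht hat hbt <;>
    have hI := measureReal_lt_max_and_lt_max_mem_Icc h₁₂ h₁₃ h₂₃ hα hZ₁ hZ₂ hZ₃ hat hbt
  · exact mul_le_mul_of_nonneg_left hI.1 (by positivity)
  · calc _ ≤ _ := mul_le_mul_of_nonneg_left hI.2 (by positivity)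
      _ = _ := by simp only [Function.comp_apply, id]; ring

end TailDependence

theorem stmt_13_general {Ω : Type*} [MeasurableSpace Ω] (μ : Measure Ω) [IsProbabilityMeasure μ]
    (Z₁ Z₂ Z₃ B : Ω → ℝ)
    (hZ₁m : Measurable Z₁) (hZ₂m : Measurable Z₂) (hZ₃m : Measurable Z₃)
    (hZ₁ : ∀ z : ℝ, 1 ≤ z → (μ {ω | Z₁ ω > z}).toReal = z ^ (-(10 / 3 : ℝ)))
    (hZ₁1 : ∀ᵐ ω ∂μ, 1 ≤ Z₁ ω)
    (hZ₂ : ∀ z : ℝ, 1 ≤ z → (μ {ω | Z₂ ω > z}).toReal = z ^ (-(5 / 2 : ℝ)))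
    (hZ₃ : ∀ z : ℝ, 1 ≤ z → (μ {ω | Z₃ ω > z}).toReal = z ^ (-(5 / 2 : ℝ)))
    (hindep : iIndepFun
      ![Z₁, Z₂, Z₃, B] μ)
    (X Y : Ω → ℝ) (hX : ∀ ω, X ω = max (Z₁ ω) (Z₂ ω)) (hY : ∀ ω, Y ω = max (Z₁ ω) (Z₃ ω))
    (U₁ U₂ : ℝ → ℝ)
    (hU₁ : ∀ t : ℝ, 1 < t →
      U₁ t = sInf {u : ℝ | 1 - (μ {ω | X ω ≤ u}).toReal ≤ 1 / t})
    (hU₂ : ∀ t : ℝ, 1 < t →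
      U₂ t = sInf {u : ℝ | 1 - (μ {ω | Y ω ≤ u}).toReal ≤ 1 / t}) :
    (∀ x : ℝ, 0 < x →
      Tendsto (fun t => U₁ (t * x) / U₁ t) atTop (nhds (x ^ (0.4 : ℝ)))) ∧
    ∃ d : ℝ, 0 < d ∧ ∀ x y : ℝ, 0 < x → 0 < y →
      Tendsto (fun t => t ^ ((4 : ℝ) / 3) *
          (μ {ω | X ω > U₁ (t / x) ∧ Y ω > U₂ (t / y)}).toReal)
        atTop (nhds (d * (min x y) ^ ((4 : ℝ) / 3))) := by
  obtain rfl : X = fun ω => max (Z₁ ω) (Z₂ ω) := funext hX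
  obtain rfl : Y = fun ω => max (Z₁ ω) (Z₃ ω) := funext hY
  have h₁₂ : IndepFun Z₁ Z₂ μ := by simpa using hindep.indepFun (show (0 : Fin 4) ≠ 1 by decide)
  have h₁₃ : IndepFun Z₁ Z₃ μ := by simpa using hindep.indepFun (show (0 : Fin 4) ≠ 2 by decide)
  have h₂₃ : IndepFun Z₂ Z₃ μ := by simpa using hindep.indepFun (show (1 : Fin 4) ≠ 2 by decide)
  have hβ : (0 : ℝ) < 5 / 2 := by norm_num
  have hαβ : (5 / 2 : ℝ) < 10 / 3 := by norm_num
  have hU₁lim := tendsto_div_rpow_of_eq_tailQuantile_max hβ hαβ h₁₂ hZ₁m hZ₂m hZ₁ hZ₁1 hZ₂ hU₁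
  have hU₂lim := tendsto_div_rpow_of_eq_tailQuantile_max hβ hαβ h₁₃ hZ₁m hZ₃m hZ₁ hZ₁1 hZ₃ hU₂
  refine ⟨fun x hx => ?_, 1, one_pos, fun x y hx hy => ?_⟩
  · rw [show (0.4 : ℝ) = (5 / 2)⁻¹ by norm_num]
    exact tendsto_div_of_tendsto_div_rpow hU₁lim hx
  · rw [one_mul, show (4 : ℝ) / 3 = 10 / 3 / (5 / 2) by norm_num]
    exact tendsto_rpow_mul_measureReal_lt_max_and_lt_max hβ (by norm_num) (by norm_num)
      h₁₂ h₁₃ h₂₃ hZ₁ hZ₂ hZ₃ hU₁lim hU₂lim hx hy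

/-- Example 1: for independent Pareto variables
`Z₁` (tail `z^{-10/3}`) and `Z₂, Z₃` (tail `z^{-5/2}`), with `B` a Bernoulli(1/2)
variable independent of `(Z₁,Z₂,Z₃)`, the pair `X = Z₁ ∨ Z₂`, `Y = Z₁ ∨ Z₃`
has extreme value index `0.4` for `X`, and
`t^{4/3} P(X > U₁(t/x), Y > U₂(t/y)) → d (x ∧ y)^{4/3}` for some `d > 0`;
hence the coefficient of tail dependence is `η = 3/4`. -/
theorem stmt_13 {Ω : Type*} [MeasurableSpace Ω] (μ : Measure Ω) [IsProbabilityMeasure μ]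
    (Z₁ Z₂ Z₃ B : Ω → ℝ)
    (hZ₁m : Measurable Z₁) (hZ₂m : Measurable Z₂) (hZ₃m : Measurable Z₃) (hBm : Measurable B)
    (hZ₁ : ∀ z : ℝ, 1 ≤ z → (μ {ω | Z₁ ω > z}).toReal = z ^ (-(10 / 3 : ℝ)))
    (hZ₁1 : ∀ᵐ ω ∂μ, 1 ≤ Z₁ ω)
    (hZ₂ : ∀ z : ℝ, 1 ≤ z → (μ {ω | Z₂ ω > z}).toReal = z ^ (-(5 / 2 : ℝ)))
    (hZ₂1 : ∀ᵐ ω ∂μ, 1 ≤ Z₂ ω)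
    (hZ₃ : ∀ z : ℝ, 1 ≤ z → (μ {ω | Z₃ ω > z}).toReal = z ^ (-(5 / 2 : ℝ)))
    (hZ₃1 : ∀ᵐ ω ∂μ, 1 ≤ Z₃ ω)
    (hB : (μ {ω | B ω = 1}).toReal = 1 / 2 ∧ (μ {ω | B ω = 0}).toReal = 1 / 2)
    (hindep : iIndepFun
      ![Z₁, Z₂, Z₃, B] μ)
    (X Y : Ω → ℝ) (hX : ∀ ω, X ω = max (Z₁ ω) (Z₂ ω)) (hY : ∀ ω, Y ω = max (Z₁ ω) (Z₃ ω))
    (U₁ U₂ : ℝ → ℝ)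
    (hU₁ : ∀ t : ℝ, 1 < t →
      U₁ t = sInf {u : ℝ | 1 - (μ {ω | X ω ≤ u}).toReal ≤ 1 / t})
    (hU₂ : ∀ t : ℝ, 1 < t →
      U₂ t = sInf {u : ℝ | 1 - (μ {ω | Y ω ≤ u}).toReal ≤ 1 / t}) :
    (∀ x : ℝ, 0 < x →
      Tendsto (fun t => U₁ (t * x) / U₁ t) atTop (nhds (x ^ (0.4 : ℝ)))) ∧
    ∃ d : ℝ, 0 < d ∧ ∀ x y : ℝ, 0 < x → 0 < y →
      Tendsto (fun t => t ^ ((4 : ℝ) / 3) *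
          (μ {ω | X ω > U₁ (t / x) ∧ Y ω > U₂ (t / y)}).toReal)
        atTop (nhds (d * (min x y) ^ ((4 : ℝ) / 3))) :=
  stmt_13_general μ Z₁ Z₂ Z₃ B hZ₁m hZ₂m hZ₃m hZ₁ hZ₁1 hZ₂ hZ₃ hindep X Y hX hY U₁ U₂ hU₁ hU₂
end
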